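/- The map n(A) acting on W_J = J ⊕ F ⊕ J ⊕ F by n(A)(X,x,Y,y) = (X + yA, x + (A,Y) + (A^#,X) + y·det(A), Y + 2A×X + y A^#, y) preserves the Freudenthal symplectic form ⟨·,·⟩, and A ↦ n(A) is a group homomorphism from the additive group of J, i.e. n(A)n(B) = n(A+B). -/
import Mathlib


universe u

/-- An (abstract) octonion algebra over a field `F`: a not-necessarily associative
unital composition algebra with conjugation `conj`, norm form `N` and scalar part `re`
(so that the octonion trace is `Tr(x) = 2·re x`, i.e. `x + conj x = Tr(x)·1`). -/
structure OctAlg (F : Type u) [Field F] where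
  O : Type u
  [addCommGroup : AddCommGroup O]
  [module : Module F O]
  mul : O → O → O
  one : O
  conj : O → O
  N : O → F
  re : O → F
  mul_add' : ∀ x y z : O, mul x (y + z) = mul x y + mul x z
  add_mul' : ∀ x y z : O, mul (x + y) z = mul x z + mul y z
  smul_mul' : ∀ (a : F) (x y : O), mul (a • x) y = a • mul x y
  mul_smul' : ∀ (a : F) (x y : O), mul x (a • y) = a • mul x y
  one_mul' : ∀ x : O, mul one x = x
  mul_one' : ∀ x : O, mul x one = x
  conj_add' : ∀ x y : O, conj (x + y) = conj x + conj y
  conj_smul' : ∀ (a : F) (x : O), conj (a • x) = a • conj x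
  conj_conj' : ∀ x : O, conj (conj x) = x
  conj_mul' : ∀ x y : O, conj (mul x y) = mul (conj y) (conj x)
  conj_one' : conj one = one
  mul_conj_self' : ∀ x : O, mul x (conj x) = N x • one
  conj_mul_self' : ∀ x : O, mul (conj x) x = N x • one
  add_conj' : ∀ x : O, x + conj x = (2 * re x) • one
  re_add' : ∀ x y : O, re (x + y) = re x + re y
  re_smul' : ∀ (a : F) (x : O), re (a • x) = a * re x
  re_one' : re one = 1
  re_conj' : ∀ x : O, re (conj x) = re x
  re_mul_comm' : ∀ x y : O, re (mul x y) = re (mul y x)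
  N_smul' : ∀ (a : F) (x : O), N (a • x) = a ^ 2 * N x
  flexible' : ∀ x y : O, mul x (mul y x) = mul (mul x y) x

attribute [instance] OctAlg.addCommGroup OctAlg.module

namespace OctAlg

variable {F : Type u} [Field F] (𝕆 : OctAlg F)

/-- The (scalar-valued) trace of an octonion. -/
def trO (x : 𝕆.O) : F := 2 * 𝕆.re x

/-- 3×3 matrices with octonion entries. -/
abbrev Mat3 := Fin 3 → Fin 3 → 𝕆.O

/-- Matrix multiplication of octonion matrices. -/
def matMul (A B : 𝕆.Mat3) : 𝕆.Mat3 := fun i j => ∑ k : Fin 3, 𝕆.mul (A i k) (B k j)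

/-- The Jordan product `A ∘ B = (AB + BA)/2`. -/
def jmul (A B : 𝕆.Mat3) : 𝕆.Mat3 := (1 / 2 : F) • (𝕆.matMul A B + 𝕆.matMul B A)

/-- An element of the 27-dimensional exceptional Jordan algebra `J`: a 3×3 Hermitian
octonion matrix, recorded by its diagonal entries `a,b,c ∈ F` and its off-diagonal
octonion entries `x,y,z` (`x` in position (2,3), `y` in position (3,1), `z` in
position (1,2)). -/
structure Herm where
  a : F
  b : F
  c : F
  x : 𝕆.O
  y : 𝕆.O
  z : 𝕆.O

/-- The identity element `I = diag(1,1,1)` of `J`. -/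
def hOne : Herm 𝕆 := ⟨1, 1, 1, 0, 0, 0⟩

variable {𝕆}

namespace Herm

instance : Zero (Herm 𝕆) := ⟨⟨0, 0, 0, 0, 0, 0⟩⟩
instance : Add (Herm 𝕆) :=
  ⟨fun X Y => ⟨X.a + Y.a, X.b + Y.b, X.c + Y.c, X.x + Y.x, X.y + Y.y, X.z + Y.z⟩⟩
instance : Neg (Herm 𝕆) := ⟨fun X => ⟨-X.a, -X.b, -X.c, -X.x, -X.y, -X.z⟩⟩
instance : Sub (Herm 𝕆) := ⟨fun X Y => X + -Y⟩
instance : SMul F (Herm 𝕆) :=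
  ⟨fun r X => ⟨r * X.a, r * X.b, r * X.c, r • X.x, r • X.y, r • X.z⟩⟩

/-- The underlying 3×3 octonion matrix of an element of `J`. -/
def toMat (X : Herm 𝕆) : 𝕆.Mat3 :=
  ![![X.a • 𝕆.one, X.z, 𝕆.conj X.y],
    ![𝕆.conj X.z, X.b • 𝕆.one, X.x],
    ![X.y, 𝕆.conj X.x, X.c • 𝕆.one]]

/-- The adjoint `X^#`, given by the explicit entrywise formulas, e.g.
`(X^#)₁₁ = bc − N(x)`, `(X^#)₁₂ = conj(x·y) − c·z`. -/
def sharp (X : Herm 𝕆) : Herm 𝕆 :=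
  ⟨X.b * X.c - 𝕆.N X.x,
   X.c * X.a - 𝕆.N X.y,
   X.a * X.b - 𝕆.N X.z,
   𝕆.conj (𝕆.mul X.y X.z) - X.a • X.x,
   𝕆.conj (𝕆.mul X.z X.x) - X.b • X.y,
   𝕆.conj (𝕆.mul X.x X.y) - X.c • X.z⟩

/-- The cubic norm `N_J(X) = abc − aN(x) − bN(y) − cN(z) + Tr(xyz)`. -/
def det (X : Herm 𝕆) : F :=
  X.a * X.b * X.c - X.a * 𝕆.N X.x - X.b * 𝕆.N X.y - X.c * 𝕆.N X.z
    + 𝕆.trO (𝕆.mul X.x (𝕆.mul X.y X.z))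

/-- The linear trace `Tr(X) = a + b + c` on `J`. -/
def tr (X : Herm 𝕆) : F := X.a + X.b + X.c

/-- The symmetric cross product `A × B = ((A+B)^# − A^# − B^#)/2`. -/
def cross (A B : Herm 𝕆) : Herm 𝕆 := (1 / 2 : F) • ((A + B).sharp - A.sharp - B.sharp)

end Herm

/-- The `F`-valued trace of a 3×3 octonion matrix (scalar part of the sum of the
diagonal entries). -/
def matTr (M : 𝕆.Mat3) : F := 𝕆.re (M 0 0) + 𝕆.re (M 1 1) + 𝕆.re (M 2 2)

/-- The trace pairing `(X, Y) = Tr(X ∘ Y)` on `J`. -/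
def ip (X Y : Herm 𝕆) : F := matTr (𝕆 := 𝕆) (𝕆.jmul X.toMat Y.toMat)

end OctAlg

namespace OctAlg

variable {F : Type u} [Field F] {𝕆 : OctAlg F}

/-- The Freudenthal space `W_J = J ⊕ F ⊕ J ⊕ F`. -/
structure WJ (𝕆 : OctAlg F) where
  X : Herm 𝕆
  xc : F
  Y : Herm 𝕆
  yc : F

namespace WJ

instance : Zero (WJ 𝕆) := ⟨⟨0, 0, 0, 0⟩⟩
instance : Add (WJ 𝕆) := ⟨fun w w' => ⟨w.X + w'.X, w.xc + w'.xc, w.Y + w'.Y, w.yc + w'.yc⟩⟩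
instance : SMul F (WJ 𝕆) := ⟨fun r w => ⟨r • w.X, r * w.xc, r • w.Y, r * w.yc⟩⟩

end WJ

/-- The Freudenthal symplectic form
`⟨w₁,w₂⟩ = x₁y₂ − x₂y₁ + (X₁,Y₂) − (X₂,Y₁)` on `W_J`. -/
def symp (w₁ w₂ : WJ 𝕆) : F :=
  w₁.xc * w₂.yc - w₂.xc * w₁.yc + ip w₁.X w₂.Y - ip w₂.X w₁.Y

end OctAlg

open OctAlg in
/-- The map `n(A)` on `W_J`:
`n(A)(X,x,Y,y) = (X + yA, x + (A,Y) + (A^#,X) + y·det(A), Y + 2A×X + yA^#, y)`. -/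
def OctAlg.nAct {F : Type u} [Field F] {𝕆 : OctAlg F} (A : Herm 𝕆) (w : WJ 𝕆) : WJ 𝕆 :=
  ⟨w.X + w.yc • A,
   w.xc + ip A w.Y + ip A.sharp w.X + w.yc * A.det,
   w.Y + (2 : F) • A.cross w.X + w.yc • A.sharp,
   w.yc⟩

namespace OctAlg

variable {F : Type u} [Field F] {𝕆 : OctAlg F}

section Olemmas

lemma o_mul_zero (x : 𝕆.O) : 𝕆.mul x 0 = 0 := by
  simpa using 𝕆.mul_smul' 0 x 0

lemma o_zero_mul (x : 𝕆.O) : 𝕆.mul 0 x = 0 := by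
  simpa using 𝕆.smul_mul' 0 0 x

lemma o_re_zero : 𝕆.re 0 = 0 := by simpa using 𝕆.re_smul' 0 0

lemma o_re_neg (x : 𝕆.O) : 𝕆.re (-x) = - 𝕆.re x := by
  have := 𝕆.re_smul' (-1) x; simpa using this

lemma o_re_sub (x y : 𝕆.O) : 𝕆.re (x - y) = 𝕆.re x - 𝕆.re y := by
  rw [sub_eq_add_neg, 𝕆.re_add', o_re_neg, sub_eq_add_neg]

lemma o_mul_neg (x y : 𝕆.O) : 𝕆.mul x (-y) = - 𝕆.mul x y := by
  have := 𝕆.mul_smul' (-1) x y; simpa using this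

lemma o_neg_mul (x y : 𝕆.O) : 𝕆.mul (-x) y = - 𝕆.mul x y := by
  have := 𝕆.smul_mul' (-1) x y; simpa using this

lemma o_mul_sub (x y z : 𝕆.O) : 𝕆.mul x (y - z) = 𝕆.mul x y - 𝕆.mul x z := by
  rw [sub_eq_add_neg, 𝕆.mul_add', o_mul_neg, sub_eq_add_neg]

lemma o_sub_mul (x y z : 𝕆.O) : 𝕆.mul (x - y) z = 𝕆.mul x z - 𝕆.mul y z := by
  rw [sub_eq_add_neg, 𝕆.add_mul', o_neg_mul, sub_eq_add_neg]

lemma conj_eq (x : 𝕆.O) : 𝕆.conj x = (2 * 𝕆.re x) • 𝕆.one - x := by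
  have := 𝕆.add_conj' x
  rw [← this]; abel

lemma N_eq (x : 𝕆.O) : 𝕆.N x = 2 * 𝕆.re x * 𝕆.re x - 𝕆.re (𝕆.mul x x) := by
  have h := congrArg 𝕆.re (𝕆.mul_conj_self' x)
  rw [conj_eq, o_mul_sub, 𝕆.mul_smul', 𝕆.mul_one', o_re_sub, 𝕆.re_smul',
    𝕆.re_smul', 𝕆.re_one', mul_one] at h
  exact h.symm

lemma lin (x y : 𝕆.O) :
    𝕆.mul x y + 𝕆.mul y x =
      (2 * 𝕆.re y) • x + (2 * 𝕆.re x) • y -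
        (4 * 𝕆.re x * 𝕆.re y - 2 * 𝕆.re (𝕆.mul x y)) • 𝕆.one := by
  have h := 𝕆.conj_mul' x y
  rw [conj_eq (𝕆.mul x y), conj_eq x, conj_eq y] at h
  simp only [o_sub_mul, o_mul_sub, 𝕆.smul_mul', 𝕆.mul_smul', 𝕆.mul_one', 𝕆.one_mul'] at h
  linear_combination (norm := module) -h

end Olemmas
end OctAlg
namespace OctAlg

variable {F : Type u} [Field F] [CharZero F] {𝕆 : OctAlg F}

lemma re_assoc (x y z : 𝕆.O) :
    𝕆.re (𝕆.mul (𝕆.mul x y) z) = 𝕆.re (𝕆.mul x (𝕆.mul y z)) := by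
  have h := congrArg 𝕆.re (𝕆.flexible' (x + z) y)
  simp only [𝕆.mul_add', 𝕆.add_mul', 𝕆.re_add'] at h
  have a := congrArg 𝕆.re (𝕆.flexible' x y)
  have b := congrArg 𝕆.re (𝕆.flexible' z y)
  have hzy := congrArg (fun w => 𝕆.re (𝕆.mul z w)) (lin x y)
  have hx := congrArg (fun w => 𝕆.re (𝕆.mul x w)) (lin y z)
  simp only [𝕆.mul_add', o_mul_sub, 𝕆.mul_smul', 𝕆.mul_one', 𝕆.re_add', o_re_sub,
    𝕆.re_smul'] at hzy hx
  have c1 := 𝕆.re_mul_comm' (𝕆.mul x y) z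
  have c2 := 𝕆.re_mul_comm' (𝕆.mul z y) x
  have c3 := 𝕆.re_mul_comm' x y
  have c4 := 𝕆.re_mul_comm' y z
  have c5 := 𝕆.re_mul_comm' x z
  rw [← c5, ← c4, ← c1] at hzy
  rw [← c2] at hx
  have e3 : 2 * 𝕆.re (𝕆.mul (𝕆.mul x y) z) = 2 * 𝕆.re (𝕆.mul x (𝕆.mul y z)) := by
    linear_combination a + b + hzy - hx - h
  exact mul_left_cancel₀ (by norm_num : (2:F) ≠ 0) e3

lemma re_cyc (x y z : 𝕆.O) :
    𝕆.re (𝕆.mul x (𝕆.mul y z)) = 𝕆.re (𝕆.mul y (𝕆.mul z x)) := by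
  rw [𝕆.re_mul_comm' x (𝕆.mul y z), re_assoc]

/-- conj-free polarized norm form -/
def qf (u v : 𝕆.O) : F := 4 * 𝕆.re u * 𝕆.re v - 2 * 𝕆.re (𝕆.mul u v)

lemma qf_comm (u v : 𝕆.O) : qf u v = qf v u := by
  unfold qf; rw [𝕆.re_mul_comm']; ring

lemma N_add (u v : 𝕆.O) : 𝕆.N (u + v) = 𝕆.N u + 𝕆.N v + qf u v := by
  unfold qf
  rw [N_eq, N_eq, N_eq, 𝕆.re_add', 𝕆.mul_add', 𝕆.add_mul', 𝕆.add_mul',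
    𝕆.re_add', 𝕆.re_add', 𝕆.re_add', 𝕆.re_mul_comm' v u]
  ring

end OctAlg
set_option linter.unusedSectionVars false

namespace OctAlg

variable {F : Type u} [Field F] [CharZero F] {𝕆 : OctAlg F}

namespace Herm

@[simp] lemma add_a (X Y : Herm 𝕆) : (X + Y).a = X.a + Y.a := rfl
@[simp] lemma add_b (X Y : Herm 𝕆) : (X + Y).b = X.b + Y.b := rfl
@[simp] lemma add_c (X Y : Herm 𝕆) : (X + Y).c = X.c + Y.c := rfl
@[simp] lemma add_x (X Y : Herm 𝕆) : (X + Y).x = X.x + Y.x := rfl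
@[simp] lemma add_y (X Y : Herm 𝕆) : (X + Y).y = X.y + Y.y := rfl
@[simp] lemma add_z (X Y : Herm 𝕆) : (X + Y).z = X.z + Y.z := rfl

@[simp] lemma sub_a (X Y : Herm 𝕆) : (X - Y).a = X.a - Y.a := (sub_eq_add_neg X.a Y.a).symm
@[simp] lemma sub_b (X Y : Herm 𝕆) : (X - Y).b = X.b - Y.b := (sub_eq_add_neg X.b Y.b).symm
@[simp] lemma sub_c (X Y : Herm 𝕆) : (X - Y).c = X.c - Y.c := (sub_eq_add_neg X.c Y.c).symm
@[simp] lemma sub_x (X Y : Herm 𝕆) : (X - Y).x = X.x - Y.x := (sub_eq_add_neg X.x Y.x).symm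
@[simp] lemma sub_y (X Y : Herm 𝕆) : (X - Y).y = X.y - Y.y := (sub_eq_add_neg X.y Y.y).symm
@[simp] lemma sub_z (X Y : Herm 𝕆) : (X - Y).z = X.z - Y.z := (sub_eq_add_neg X.z Y.z).symm

@[simp] lemma smul_a (r : F) (X : Herm 𝕆) : (r • X).a = r * X.a := rfl
@[simp] lemma smul_b (r : F) (X : Herm 𝕆) : (r • X).b = r * X.b := rfl
@[simp] lemma smul_c (r : F) (X : Herm 𝕆) : (r • X).c = r * X.c := rfl
@[simp] lemma smul_x (r : F) (X : Herm 𝕆) : (r • X).x = r • X.x := rfl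
@[simp] lemma smul_y (r : F) (X : Herm 𝕆) : (r • X).y = r • X.y := rfl
@[simp] lemma smul_z (r : F) (X : Herm 𝕆) : (r • X).z = r • X.z := rfl

lemma ext' {X Y : Herm 𝕆} (ha : X.a = Y.a) (hb : X.b = Y.b) (hc : X.c = Y.c)
    (hx : X.x = Y.x) (hy : X.y = Y.y) (hz : X.z = Y.z) : X = Y := by
  cases X; cases Y; simp_all

end Herm

lemma ip_eq (X Y : Herm 𝕆) :
    ip X Y = X.a * Y.a + X.b * Y.b + X.c * Y.c
      + qf X.x Y.x + qf X.y Y.y + qf X.z Y.z := by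
  unfold ip matTr jmul matMul Herm.toMat qf
  simp only [Pi.smul_apply, Pi.add_apply, Fin.sum_univ_three,
    Matrix.cons_val', Matrix.cons_val_zero, Matrix.cons_val_one, Matrix.head_cons,
    Matrix.head_fin_const, Matrix.empty_val', Matrix.cons_val_fin_one, Matrix.cons_val_two,
    Matrix.tail_cons, conj_eq, o_mul_sub, o_sub_mul, 𝕆.mul_smul', 𝕆.smul_mul',
    𝕆.mul_one', 𝕆.one_mul', 𝕆.re_add', o_re_sub, 𝕆.re_smul', 𝕆.re_one', smul_eq_mul]
  rw [𝕆.re_mul_comm' Y.x X.x, 𝕆.re_mul_comm' Y.y X.y, 𝕆.re_mul_comm' Y.z X.z]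
  ring

end OctAlg
namespace OctAlg

variable {F : Type u} [Field F] [CharZero F] {𝕆 : OctAlg F}

lemma qf_add_left (u v w : 𝕆.O) : qf (u + v) w = qf u w + qf v w := by
  unfold qf; rw [𝕆.re_add', 𝕆.add_mul', 𝕆.re_add']; ring

lemma qf_add_right (u v w : 𝕆.O) : qf u (v + w) = qf u v + qf u w := by
  unfold qf; rw [𝕆.re_add', 𝕆.mul_add', 𝕆.re_add']; ring

lemma qf_smul_left (r : F) (u v : 𝕆.O) : qf (r • u) v = r * qf u v := by
  unfold qf; rw [𝕆.re_smul', 𝕆.smul_mul', 𝕆.re_smul']; ring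

lemma qf_smul_right (r : F) (u v : 𝕆.O) : qf u (r • v) = r * qf u v := by
  unfold qf; rw [𝕆.re_smul', 𝕆.mul_smul', 𝕆.re_smul']; ring

lemma ip_comm (X Y : Herm 𝕆) : ip X Y = ip Y X := by
  rw [ip_eq, ip_eq, qf_comm X.x, qf_comm X.y, qf_comm X.z]; ring

lemma ip_add_left (X Y Z : Herm 𝕆) : ip (X + Y) Z = ip X Z + ip Y Z := by
  simp only [ip_eq, Herm.add_a, Herm.add_b, Herm.add_c, Herm.add_x, Herm.add_y, Herm.add_z,
    qf_add_left]; ring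

lemma ip_add_right (X Y Z : Herm 𝕆) : ip X (Y + Z) = ip X Y + ip X Z := by
  rw [ip_comm, ip_add_left, ip_comm Y, ip_comm Z]

lemma ip_smul_left (r : F) (X Y : Herm 𝕆) : ip (r • X) Y = r * ip X Y := by
  simp only [ip_eq, Herm.smul_a, Herm.smul_b, Herm.smul_c, Herm.smul_x, Herm.smul_y,
    Herm.smul_z, qf_smul_left]; ring

lemma ip_smul_right (r : F) (X Y : Herm 𝕆) : ip X (r • Y) = r * ip X Y := by
  rw [ip_comm, ip_smul_left, ip_comm]

lemma cross_comm (A B : Herm 𝕆) : A.cross B = B.cross A := by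
  unfold Herm.cross
  have h : A + B = B + A :=
    Herm.ext' (by simp; ring) (by simp; ring) (by simp; ring)
      (by simp; abel) (by simp; abel) (by simp; abel)
  rw [h]
  exact congrArg _ (Herm.ext' (by simp; ring) (by simp; ring) (by simp; ring)
    (by simp; abel) (by simp; abel) (by simp; abel))

end OctAlg
namespace OctAlg

variable {F : Type u} [Field F] [CharZero F] {𝕆 : OctAlg F}

lemma cross_self (A : Herm 𝕆) : A.cross A = A.sharp := by
  apply Herm.ext' <;>
    simp only [Herm.cross, Herm.sharp, Herm.smul_a, Herm.smul_b, Herm.smul_c,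
      Herm.smul_x, Herm.smul_y, Herm.smul_z, Herm.sub_a, Herm.sub_b, Herm.sub_c,
      Herm.sub_x, Herm.sub_y, Herm.sub_z, Herm.add_a, Herm.add_b, Herm.add_c,
      Herm.add_x, Herm.add_y, Herm.add_z, N_eq, conj_eq, 𝕆.mul_add', 𝕆.add_mul',
      o_mul_sub, o_sub_mul, 𝕆.mul_smul', 𝕆.smul_mul', 𝕆.mul_one', 𝕆.one_mul',
      𝕆.re_add', o_re_sub, 𝕆.re_smul', 𝕆.re_one']
  case ha => ring
  case hb => ring
  case hc => ring
  case hx => module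
  case hy => module
  case hz => module

lemma sharp_add (A B : Herm 𝕆) :
    (A + B).sharp = A.sharp + B.sharp + (2 : F) • (A.cross B) := by
  apply Herm.ext' <;>
    simp only [Herm.cross, Herm.sharp, Herm.smul_a, Herm.smul_b, Herm.smul_c,
      Herm.smul_x, Herm.smul_y, Herm.smul_z, Herm.sub_a, Herm.sub_b, Herm.sub_c,
      Herm.sub_x, Herm.sub_y, Herm.sub_z, Herm.add_a, Herm.add_b, Herm.add_c,
      Herm.add_x, Herm.add_y, Herm.add_z, N_eq, conj_eq, 𝕆.mul_add', 𝕆.add_mul',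
      o_mul_sub, o_sub_mul, 𝕆.mul_smul', 𝕆.smul_mul', 𝕆.mul_one', 𝕆.one_mul',
      𝕆.re_add', o_re_sub, 𝕆.re_smul', 𝕆.re_one']
  case ha => ring
  case hb => ring
  case hc => ring
  case hx => module
  case hy => module
  case hz => module

end OctAlg
namespace OctAlg

variable {F : Type u} [Field F] [CharZero F] {𝕆 : OctAlg F}

lemma det_add (A B : Herm 𝕆) :
    (A + B).det = A.det + B.det + ip A.sharp B + ip A B.sharp := by
  simp only [Herm.det, Herm.sharp, ip_eq, qf, trO, Herm.add_a, Herm.add_b, Herm.add_c,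
    Herm.add_x, Herm.add_y, Herm.add_z, Herm.sub_a, Herm.sub_b, Herm.sub_c, Herm.sub_x,
    Herm.sub_y, Herm.sub_z, N_eq, conj_eq, 𝕆.mul_add', 𝕆.add_mul', o_mul_sub, o_sub_mul,
    𝕆.mul_smul', 𝕆.smul_mul', 𝕆.mul_one', 𝕆.one_mul', 𝕆.re_add', o_re_sub, 𝕆.re_smul',
    𝕆.re_one', re_assoc]
  rw [← re_cyc B.x A.y A.z, ← re_cyc B.y A.z A.x, ← re_cyc A.x B.y A.z,
    ← re_cyc B.x A.y B.z, ← re_cyc B.y A.z B.x, ← re_cyc B.x B.y A.z,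
    𝕆.re_mul_comm' B.x A.x, 𝕆.re_mul_comm' B.y A.y, 𝕆.re_mul_comm' B.z A.z]
  ring

end OctAlg
namespace OctAlg

variable {F : Type u} [Field F] [CharZero F] {𝕆 : OctAlg F}

lemma ip_cross_swap (U V W : Herm 𝕆) : ip U (V.cross W) = ip V (U.cross W) := by
  simp only [Herm.cross, Herm.sharp, ip_eq, qf, Herm.add_a, Herm.add_b, Herm.add_c,
    Herm.add_x, Herm.add_y, Herm.add_z, Herm.sub_a, Herm.sub_b, Herm.sub_c, Herm.sub_x,
    Herm.sub_y, Herm.sub_z, Herm.smul_a, Herm.smul_b, Herm.smul_c, Herm.smul_x,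
    Herm.smul_y, Herm.smul_z, N_eq, conj_eq, 𝕆.mul_add', 𝕆.add_mul', o_mul_sub, o_sub_mul,
    𝕆.mul_smul', 𝕆.smul_mul', 𝕆.mul_one', 𝕆.one_mul', 𝕆.re_add', o_re_sub, 𝕆.re_smul',
    𝕆.re_one', re_assoc]
  rw [re_cyc U.x V.y W.z, ← re_cyc V.z U.x W.y, re_cyc U.y V.z W.x, ← re_cyc V.x U.y W.z,
    re_cyc U.z V.x W.y, ← re_cyc V.y U.z W.x,
    𝕆.re_mul_comm' V.x U.x, 𝕆.re_mul_comm' V.y U.y, 𝕆.re_mul_comm' V.z U.z]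
  simp only [𝕆.re_mul_comm' W.x V.x, 𝕆.re_mul_comm' W.y V.y, 𝕆.re_mul_comm' W.z V.z,
    𝕆.re_mul_comm' W.x U.x, 𝕆.re_mul_comm' W.y U.y, 𝕆.re_mul_comm' W.z U.z]
  ring

end OctAlg
namespace OctAlg

variable {F : Type u} [Field F] [CharZero F] {𝕆 : OctAlg F}

lemma WJ.ext' {w w' : WJ 𝕆} (h1 : w.X = w'.X) (h2 : w.xc = w'.xc)
    (h3 : w.Y = w'.Y) (h4 : w.yc = w'.yc) : w = w' := by
  cases w; cases w'; simp_all

lemma symp_invariant (A : Herm 𝕆) (w₁ w₂ : WJ 𝕆) :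
    symp (nAct A w₁) (nAct A w₂) = symp w₁ w₂ := by
  have e1 : ip w₁.X (A.cross w₂.X) = ip w₂.X (A.cross w₁.X) := by
    rw [cross_comm A w₂.X, ip_cross_swap w₁.X w₂.X A, cross_comm w₁.X A]
  have e2 : ∀ Z : Herm 𝕆, ip A.sharp Z = ip A (A.cross Z) := by
    intro Z
    rw [cross_comm A Z, ip_cross_swap A Z A, cross_self, ip_comm]
  have e21 := e2 w₁.X
  have e22 := e2 w₂.X
  have c1 : ip w₁.X A.sharp = ip A.sharp w₁.X := ip_comm _ _
  have c2 : ip w₂.X A.sharp = ip A.sharp w₂.X := ip_comm _ _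
  simp only [symp, nAct, ip_add_left, ip_add_right, ip_smul_left, ip_smul_right]
  linear_combination (2:F) * e1 + 2 * w₂.yc * e21 - 2 * w₁.yc * e22 + w₂.yc * c1 - w₁.yc * c2

lemma nAct_comp (A B : Herm 𝕆) (w : WJ 𝕆) : nAct A (nAct B w) = nAct (A + B) w := by
  have e3 : ip (A.cross B) w.X = ip A (B.cross w.X) := by
    rw [ip_comm, ip_cross_swap w.X A B, cross_comm w.X B]
  apply WJ.ext'
  · show w.X + w.yc • B + w.yc • A = w.X + w.yc • (A + B)
    exact Herm.ext' (by simp; ring) (by simp; ring) (by simp; ring)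
      (by simp [smul_add]; abel) (by simp [smul_add]; abel) (by simp [smul_add]; abel)
  · show w.xc + ip B w.Y + ip B.sharp w.X + w.yc * B.det
        + ip A (w.Y + (2:F) • B.cross w.X + w.yc • B.sharp)
        + ip A.sharp (w.X + w.yc • B) + w.yc * A.det
      = w.xc + ip (A + B) w.Y + ip (A + B).sharp w.X + w.yc * (A + B).det
    simp only [det_add, sharp_add, ip_add_left, ip_add_right, ip_smul_left, ip_smul_right]
    linear_combination (-2:F) * e3
  · show w.Y + (2:F) • B.cross w.X + w.yc • B.sharp
        + (2:F) • A.cross (w.X + w.yc • B) + w.yc • A.sharp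
      = w.Y + (2:F) • (A + B).cross w.X + w.yc • (A + B).sharp
    apply Herm.ext' <;>
      simp only [Herm.cross, Herm.sharp, Herm.smul_a, Herm.smul_b, Herm.smul_c,
        Herm.smul_x, Herm.smul_y, Herm.smul_z, Herm.sub_a, Herm.sub_b, Herm.sub_c,
        Herm.sub_x, Herm.sub_y, Herm.sub_z, Herm.add_a, Herm.add_b, Herm.add_c,
        Herm.add_x, Herm.add_y, Herm.add_z, N_eq, conj_eq, 𝕆.mul_add', 𝕆.add_mul',
        o_mul_sub, o_sub_mul, 𝕆.mul_smul', 𝕆.smul_mul', 𝕆.mul_one', 𝕆.one_mul',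
        𝕆.re_add', o_re_sub, 𝕆.re_smul', 𝕆.re_one', smul_add, smul_sub, smul_smul]
    case ha => ring
    case hb => ring
    case hc => ring
    case hx => module
    case hy => module
    case hz => module
  · rfl

end OctAlg
open OctAlg in
/-- `n(A)` preserves the Freudenthal symplectic form, and
`A ↦ n(A)` is a homomorphism from the additive group of `J`: `n(A)n(B) = n(A+B)`. -/
theorem stmt5 {F : Type u} [Field F] [CharZero F] (𝕆 : OctAlg F) :
    (∀ (A : Herm 𝕆) (w₁ w₂ : WJ 𝕆), symp (nAct A w₁) (nAct A w₂) = symp w₁ w₂) ∧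
    (∀ (A B : Herm 𝕆) (w : WJ 𝕆), nAct A (nAct B w) = nAct (A + B) w) :=
  ⟨symp_invariant, nAct_comp⟩
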